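/- arXiv:1611.01784 — 4 statements merged into one kernel-verified Lean document; each statement's English description precedes it below -/
import Mathlib

section
/- Let H be a group, E a subgroup of H contained in the center of H, N a subgroup of H, S a subgroup of N, and Z a subgroup of E. Then, as subsets of H, (S·E) ∩ (Z·N) = S·Z·(N ∩ E), where for subsets A, B of H, A·B denotes the set {ab : a ∈ A, b ∈ B}. -/
open scoped Pointwise

/-- The group-theoretic core of Proposition `prop:semisimple`: if `E` is a central
subgroup of `H`, `N` a subgroup, `S ≤ N` and `Z ≤ E`, then as subsets of `H`,
`(S·E) ∩ (Z·N) = S·Z·(N ∩ E)`. -/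
theorem inter_of_products_eq {H : Type*} [Group H] (E N S Z : Subgroup H)
    (hE : E ≤ Subgroup.center H) (hS : S ≤ N) (hZ : Z ≤ E) :
    ((S : Set H) * (E : Set H)) ∩ ((Z : Set H) * (N : Set H)) =
      (S : Set H) * (Z : Set H) * ((N ⊓ E : Subgroup H) : Set H) := by
  ext x
  simp only [Set.mem_inter_iff, Set.mem_mul]
  constructor
  · rintro ⟨⟨s, hs, e, he, rfl⟩, z, hz, n, hn, hzn⟩
    refine ⟨s * z, ⟨s, hs, z, hz, rfl⟩, z⁻¹ * e, ⟨?_, E.mul_mem (E.inv_mem (hZ hz)) he⟩, ?_⟩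
    · -- z⁻¹ * e = s⁻¹ * n ∈ N
      have : z⁻¹ * e = s⁻¹ * n := by
        have hc : z * n = s * e := hzn
        have hz' : ∀ y : H, z * y = y * z := fun y =>
          ((Subgroup.mem_center_iff.mp (hE (hZ hz))) y).symm
        calc z⁻¹ * e = z⁻¹ * (s⁻¹ * (s * e)) := by group
          _ = z⁻¹ * (s⁻¹ * (z * n)) := by rw [hc]
          _ = s⁻¹ * n := by rw [← mul_assoc, ← mul_assoc, mul_assoc z⁻¹ s⁻¹ z, ← hz' s⁻¹]; group
      rw [this]
      exact N.mul_mem (N.inv_mem (hS hs)) hn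
    · group
  · rintro ⟨sz, ⟨s, hs, z, hz, rfl⟩, w, ⟨hwN, hwE⟩, rfl⟩
    have hzc : ∀ y : H, z * y = y * z := fun y =>
      ((Subgroup.mem_center_iff.mp (hE (hZ hz))) y).symm
    refine ⟨⟨s, hs, z * w, E.mul_mem (hZ hz) hwE, by group⟩,
      z, hz, s * w, N.mul_mem (hS hs) hwN, ?_⟩
    rw [← mul_assoc, hzc s, mul_assoc]
end

section
/- Let H be a group, E a subgroup of H contained in the center of H, N a subgroup of H, S a subgroup of N, and Z a subgroup of E, and suppose that the subgroup N ∩ E is finite. Then the join S ⊔ Z (the subgroup generated by S and Z) has finite index in the subgroup (S ⊔ E) ∩ (Z ⊔ N). -/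
/-!
An element `g = s e = z n` of `(S ⊔ E) ⊓ (Z ⊔ N)`, with `s ∈ S`, `e ∈ E`, `z ∈ Z`, `n ∈ N`,
factors as `g = s z (z⁻¹ e)`, and `z⁻¹ e = s⁻¹ n` lies in `N ⊓ E` because `z` is central.
Hence the intersection lies in `(S ⊔ Z) ⊔ (N ⊓ E)`, and a subgroup has finite index in its join
with a finite normal subgroup.
-/

open scoped Pointwise

namespace Subgroup

variable {G : Type*} [Group G]

theorem normal_of_le_center {L : Subgroup G} (hL : L ≤ center G) : L.Normal where
  conj_mem l hl g := by
    rw [mem_center_iff.mp (hL hl) g, mul_inv_cancel_right]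
    exact hl

theorem isFiniteRelIndex_sup_of_normal_of_finite (A L : Subgroup G) [L.Normal] [Finite L] :
    A.IsFiniteRelIndex (A ⊔ L) := by
  have hLle : L ≤ A ⊔ L := le_sup_right
  have hsurj : Function.Surjective fun l : L ↦
      (QuotientGroup.mk (⟨l, hLle l.2⟩ : ↥(A ⊔ L)) : ↥(A ⊔ L) ⧸ A.subgroupOf (A ⊔ L)) := by
    rintro ⟨g, hg⟩
    obtain ⟨l, hl, a, ha, rfl⟩ : g ∈ (L : Set G) * (A : Set G) := by
      rw [← normal_mul, sup_comm]
      exact hg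
    refine ⟨⟨l, hl⟩, QuotientGroup.eq.mpr ?_⟩
    simpa [mem_subgroupOf] using ha
  have : Finite (↥(A ⊔ L) ⧸ A.subgroupOf (A ⊔ L)) := Finite.of_surjective _ hsurj
  rw [isFiniteRelIndex_iff_finiteIndex]
  exact finiteIndex_of_finite_quotient

theorem sup_inf_sup_le_sup_sup_inf {E N S Z : Subgroup G} [E.Normal] (hS : S ≤ N)
    (hZE : Z ≤ E) (hZ : Z ≤ center G) : (S ⊔ E) ⊓ (Z ⊔ N) ≤ S ⊔ Z ⊔ (N ⊓ E) := by
  have : Z.Normal := normal_of_le_center hZ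
  rintro g ⟨hgSE, hgZN⟩
  obtain ⟨s, hs, e, he, rfl⟩ : g ∈ (S : Set G) * (E : Set G) := by rw [← mul_normal]; exact hgSE
  obtain ⟨z, hz, n, hn, hzn⟩ : s * e ∈ (Z : Set G) * (N : Set G) := by rw [← normal_mul]; exact hgZN
  have hzc : ∀ x : G, x * z = z * x := fun x ↦ mem_center_iff.mp (hZ hz) x
  have hlam : z⁻¹ * e = s⁻¹ * n :=
    calc z⁻¹ * e = z⁻¹ * (s⁻¹ * (z * n)) := by
          rw [show z * n = s * e from hzn, inv_mul_cancel_left]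
      _ = s⁻¹ * n := by rw [← mul_assoc s⁻¹, hzc s⁻¹, mul_assoc, inv_mul_cancel_left]
  have hmemNE : z⁻¹ * e ∈ N ⊓ E :=
    ⟨hlam ▸ N.mul_mem (N.inv_mem (hS hs)) hn, E.mul_mem (E.inv_mem (hZE hz)) he⟩
  show s * e ∈ _
  rw [show s * e = s * z * (z⁻¹ * e) by group]
  exact mul_mem (mul_mem (mem_sup_left (mem_sup_left hs)) (mem_sup_left (mem_sup_right hz)))
    (mem_sup_right hmemNE)

end Subgroup

open Subgroup in
/-- The finite-index conclusion in the proof of Proposition `prop:semisimple`: if `E` is a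
central subgroup of `H`, `N` a subgroup, `S ≤ N`, `Z ≤ E`, and `Λ = N ∩ E` is finite, then
`S ⊔ Z` has finite index in `(S ⊔ E) ∩ (Z ⊔ N)`. -/
theorem join_finite_index {H : Type*} [Group H] (E N S Z : Subgroup H)
    (hE : E ≤ Subgroup.center H) (hS : S ≤ N) (hZ : Z ≤ E)
    (hfin : Finite (N ⊓ E : Subgroup H)) :
    ((S ⊔ Z).subgroupOf ((S ⊔ E) ⊓ (Z ⊔ N))).FiniteIndex := by
  have : E.Normal := normal_of_le_center hE
  have : (N ⊓ E).Normal := normal_of_le_center (inf_le_right.trans hE)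
  have := isFiniteRelIndex_sup_of_normal_of_finite (S ⊔ Z) (N ⊓ E)
  have := isFiniteRelIndex_of_le_right (S ⊔ Z) (sup_inf_sup_le_sup_sup_inf hS hZ (hZ.trans hE))
  infer_instance
end

section
/- Let k be a field and φ : k → k a function satisfying φ(x + z) = φ(x) + φ(z) + x·z for all x, z ∈ k. For x ∈ k let y(x) be the 3×3 matrix with rows (1, x, φ(x)), (0, 1, x), (0, 0, 1), and let Y = {y(x) : x ∈ k}. Let λ, a be nonzero elements of k and b, c, d ∈ k, and let M be the 3×3 matrix with rows (aλ², ab, ac), (0, aλ, ad), (0, 0, a). Then M·y(x)·M⁻¹ ∈ Y for all x ∈ k if and only if φ(λx) = λ²·φ(x) + (b − λd)·x for all x ∈ k; and when this condition holds, M·y(x)·M⁻¹ = y(λx) for every x ∈ k. -/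
/-- The unipotent matrix `y(x)` with rows `(1, x, φ(x))`, `(0, 1, x)`, `(0, 0, 1)`. -/
def ymat {k : Type*} [Field k] (φ : k → k) (x : k) : Matrix (Fin 3) (Fin 3) k :=
  !![1, x, φ x; 0, 1, x; 0, 0, 1]

/-- The matrix `M(λ, a, b, c, d)` with rows `(aλ², ab, ac)`, `(0, aλ, ad)`, `(0, 0, a)`. -/
def Mmat {k : Type*} [Field k] (l a b c d : k) : Matrix (Fin 3) (Fin 3) k :=
  !![a * l ^ 2, a * b, a * c; 0, a * l, a * d; 0, 0, a]

lemma conj_eq {k : Type*} [Field k] (φ : k → k) (l a : k) (hl : l ≠ 0) (ha : a ≠ 0)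
    (b c d : k) (x : k) :
    Mmat l a b c d * ymat φ x * (Mmat l a b c d)⁻¹ =
      !![1, l * x, l ^ 2 * φ x + (b - l * d) * x; 0, 1, l * x; 0, 0, 1] := by
  have hdet : IsUnit (Mmat l a b c d).det := by
    have h : (Mmat l a b c d).det = a ^ 3 * l ^ 3 := by
      simp [Mmat, Matrix.det_fin_three, Matrix.vecHead, Matrix.vecTail]; ring
    rw [h]
    exact isUnit_iff_ne_zero.mpr (by simp [pow_eq_zero_iff, ha, hl])
  have key : Mmat l a b c d * ymat φ x =
      !![1, l * x, l ^ 2 * φ x + (b - l * d) * x; 0, 1, l * x; 0, 0, 1] * Mmat l a b c d := by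
    ext i j
    fin_cases i <;> fin_cases j <;>
      simp [Mmat, ymat, Matrix.mul_apply, Fin.sum_univ_three, Matrix.vecHead, Matrix.vecTail] <;> ring
  rw [key, Matrix.mul_nonsing_inv_cancel_right _ _ hdet]

/-- The normalizer computation in the (NC,NC) case: `M·y(x)·M⁻¹ ∈ Y = {y(x) : x ∈ k}` for
all `x` if and only if `φ(λx) = λ²·φ(x) + (b − λd)·x` for all `x`; and when this condition
holds, `M·y(x)·M⁻¹ = y(λx)`. -/
theorem normalizer_of_Y {k : Type*} [Field k] (φ : k → k)
    (hφ : ∀ x z : k, φ (x + z) = φ x + φ z + x * z)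
    (l a : k) (hl : l ≠ 0) (ha : a ≠ 0) (b c d : k) :
    ((∀ x : k, Mmat l a b c d * ymat φ x * (Mmat l a b c d)⁻¹ ∈ Set.range (ymat φ)) ↔
      ∀ x : k, φ (l * x) = l ^ 2 * φ x + (b - l * d) * x) ∧
    ((∀ x : k, φ (l * x) = l ^ 2 * φ x + (b - l * d) * x) →
      ∀ x : k, Mmat l a b c d * ymat φ x * (Mmat l a b c d)⁻¹ = ymat φ (l * x)) := by
  have hcond : ∀ x : k, (∀ t, ymat φ t =
      !![1, l * x, l ^ 2 * φ x + (b - l * d) * x; 0, 1, l * x; 0, 0, 1] → t = l * x) := by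
    intro x t ht
    have := congrArg (fun A : Matrix (Fin 3) (Fin 3) k => A 0 1) ht
    simpa [ymat] using this
  constructor
  · constructor
    · intro h x
      obtain ⟨t, ht⟩ := h x
      rw [conj_eq φ l a hl ha b c d x] at ht
      have htx := hcond x t ht
      have h02 := congrArg (fun A : Matrix (Fin 3) (Fin 3) k => A 0 2) ht
      simp only [ymat] at h02
      rw [htx] at h02
      simpa using h02
    · intro h x
      refine ⟨l * x, ?_⟩
      rw [conj_eq φ l a hl ha b c d x, ymat, h x]
  · intro h x
    rw [conj_eq φ l a hl ha b c d x, ymat, h x]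
end

section
/- Let k be a field, let ψ, φ : k → k be functions, let a, t be nonzero elements of k, and let u, v ∈ k. Let g be the 3×3 matrix with rows (at, φ(a)t, ut), (0, at, vt), (0, 0, t), and for x ∈ k let W(x) be the 3×3 matrix with rows (1, 0, ψ(x)), (0, 1, x), (0, 0, 1). Then for every x ∈ k, g·W(x)·g⁻¹ equals the matrix with rows (1, 0, a·ψ(x) + x·φ(a)), (0, 1, a·x), (0, 0, 1). Consequently, g·W(x)·g⁻¹ ∈ {W(z) : z ∈ k} for all x ∈ k if and only if ψ(a·x) = a·ψ(x) + x·φ(a) for all x ∈ k. -/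
/-- The unipotent matrix `W(x)` with rows `(1, 0, ψ(x))`, `(0, 1, x)`, `(0, 0, 1)`. -/
def Wmat {k : Type*} [Field k] (ψ : k → k) (x : k) : Matrix (Fin 3) (Fin 3) k :=
  !![1, 0, ψ x; 0, 1, x; 0, 0, 1]

lemma gmat_inv {k : Type*} [Field k] (a t : k) (ha : a ≠ 0) (ht : t ≠ 0) (w u v : k) :
    (!![a * t, w * t, u * t; 0, a * t, v * t; 0, 0, t])⁻¹ =
      !![1/(a*t), -w/(a^2*t), (w*v - u*a)/(a^2*t);
         0, 1/(a*t), -v/(a*t); 0, 0, 1/t] := by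
  apply Matrix.inv_eq_right_inv
  ext i j
  fin_cases i <;> fin_cases j <;>
    simp [Matrix.mul_apply, Fin.sum_univ_three, Matrix.vecHead, Matrix.vecTail] <;> field_simp <;> ring_nf <;> field_simp <;> ring

/-- The conjugation computation in the (CQ,NC) case: for
`g` with rows `(at, φ(a)t, ut)`, `(0, at, vt)`, `(0, 0, t)`, one has
`g·W(x)·g⁻¹ = ` the matrix with rows `(1, 0, a·ψ(x) + x·φ(a))`, `(0, 1, a·x)`, `(0, 0, 1)`;
consequently `g·W(x)·g⁻¹ ∈ {W(z) : z ∈ k}` for all `x` iff `ψ(a·x) = a·ψ(x) + x·φ(a)`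
for all `x`. -/
theorem conj_Wmat {k : Type*} [Field k] (ψ φ : k → k) (a t : k) (ha : a ≠ 0) (ht : t ≠ 0)
    (u v : k) :
    (∀ x : k,
      !![a * t, φ a * t, u * t; 0, a * t, v * t; 0, 0, t] * Wmat ψ x *
          (!![a * t, φ a * t, u * t; 0, a * t, v * t; 0, 0, t])⁻¹ =
        !![1, 0, a * ψ x + x * φ a; 0, 1, a * x; 0, 0, 1]) ∧
    ((∀ x : k,
        !![a * t, φ a * t, u * t; 0, a * t, v * t; 0, 0, t] * Wmat ψ x *
            (!![a * t, φ a * t, u * t; 0, a * t, v * t; 0, 0, t])⁻¹ ∈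
          Set.range (Wmat ψ)) ↔
      ∀ x : k, ψ (a * x) = a * ψ x + x * φ a) := by
  have hconj : ∀ x : k,
      !![a * t, φ a * t, u * t; 0, a * t, v * t; 0, 0, t] * Wmat ψ x *
          (!![a * t, φ a * t, u * t; 0, a * t, v * t; 0, 0, t])⁻¹ =
        !![1, 0, a * ψ x + x * φ a; 0, 1, a * x; 0, 0, 1] := by
    intro x
    rw [gmat_inv a t ha ht (φ a) u v, Wmat]
    ext i j
    fin_cases i <;> fin_cases j <;>
      simp [Matrix.mul_apply, Fin.sum_univ_three, Matrix.vecHead, Matrix.vecTail] <;> field_simp <;> ring_nf <;> field_simp <;> ring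
  refine ⟨hconj, ?_⟩
  constructor
  · intro h x
    obtain ⟨z, hz⟩ := h x
    rw [hconj x] at hz
    have h02 : ψ z = a * ψ x + x * φ a := by
      simpa [Wmat] using congrFun (congrFun hz 0) 2
    have h12 : z = a * x := by
      simpa [Wmat] using congrFun (congrFun hz 1) 2
    rw [← h12, h02]
  · intro h x
    rw [hconj x]
    exact ⟨a * x, by rw [Wmat, h x]⟩
end
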